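/- Let i ≥ 1 be a fixed index and let w be a 1-repetition-free string over 𝒮 (every two consecutive symbols of w are distinct). Suppose the bits h_i(S), for S ∈ 𝒮, are independent random variables, each uniformly distributed in {0,1}. Then the expected length of Compress_i(w) satisfies E[|Compress_i(w)|] ≤ (3/4)·|w| + 1/4. -/

import Mathlib

namespace DynStr

/-- The set `𝒮` of symbols over the alphabet `α`:
base letters, pairing symbols `(S₁,S₂)` and power symbols `(S,k)`. -/
inductive Sym (α : Type) : Type where
  | base : α → Sym α
  | pair : Sym α → Sym α → Sym α
  | pow  : Sym α → ℕ → Sym α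
deriving DecidableEq

variable {α : Type} [DecidableEq α]

/-- The string over `Σ` generated by a symbol. -/
def strSym : Sym α → List α
  | .base a => [a]
  | .pair s t => strSym s ++ strSym t
  | .pow s k => (List.replicate k (strSym s)).flatten

/-- Run-length pairs: the maximal blocks of equal elements, with multiplicities. -/
def runs {β : Type} [DecidableEq β] : List β → List (β × ℕ)
  | [] => []
  | a :: l =>
    match runs l with
    | [] => [(a, 1)]
    | (b, k) :: rest => if a = b then (b, k + 1) :: rest else (a, 1) :: (b, k) :: rest

/-- `|RLE(w)|`: the number of blocks in the run-length encoding of `w`. -/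
def rleLen {β : Type} [DecidableEq β] (w : List β) : ℕ := (runs w).length

/-- The `Rle` function: replace every maximal block `S^k` with `k ≥ 2` by `(S,k)`. -/
def rle : List (Sym α) → List (Sym α) :=
  fun w => (runs w).map fun p => if 2 ≤ p.2 then Sym.pow p.1 p.2 else p.1

/-- `Compressᵢ` with bit function `g`: replace every (disjoint, greedily-from-the-left
determined, i.e. uniquely determined) adjacent pair `S S'` with `g S = 0`, `g S' = 1`
by the symbol `(S,S')`. -/
def compress (g : Sym α → Bool) : List (Sym α) → List (Sym α)
  | [] => []
  | [a] => [a]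
  | a :: b :: l =>
    if g a = false ∧ g b = true then Sym.pair a b :: compress g l
    else a :: compress g (b :: l)

/-- `shrinkᵢ` (for `i ≥ 1`): `Rle` for odd `i`, `Compress_{i/2}` for even `i`. -/
def shrinkStep (h : ℕ → Sym α → Bool) (i : ℕ) (w : List (Sym α)) : List (Sym α) :=
  if i % 2 = 1 then rle w else compress (h (i / 2)) w

/-- `shrink^i`, the iterated parsing function. -/
def shrinkIter (h : ℕ → Sym α → Bool) : ℕ → List (Sym α) → List (Sym α)
  | 0, w => w
  | i + 1, w => shrinkStep h (i + 1) (shrinkIter h i w)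

/-- `Depth(w)`: the least `i` with `|shrink^i(w)| = 1`. -/
noncomputable def depth (h : ℕ → Sym α → Bool) (w : List (Sym α)) : ℕ :=
  sInf {i | (shrinkIter h i w).length = 1}

/-- A string over `Σ` viewed as a string of (base) symbols. -/
def embed (w : List α) : List (Sym α) := w.map Sym.base

/-- Sizes of the blocks formed by `Compress` with bit function `g`. -/
def compBlocks (g : Sym α → Bool) : List (Sym α) → List ℕ
  | [] => []
  | [_] => [1]
  | a :: b :: l =>
    if g a = false ∧ g b = true then 2 :: compBlocks g l
    else 1 :: compBlocks g (b :: l)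

/-- Sizes of the blocks formed by `shrinkᵢ`. -/
def stepBlocks (h : ℕ → Sym α → Bool) (i : ℕ) (w : List (Sym α)) : List ℕ :=
  if i % 2 = 1 then (runs w).map Prod.snd else compBlocks (h (i / 2)) w

/-- Sizes of the blocks formed when passing from level `l` to level `l+1` of the
uncompressed parse tree of `w`. -/
def blocksAt (h : ℕ → Sym α → Bool) (w : List (Sym α)) (l : ℕ) : List ℕ :=
  stepBlocks h (l + 1) (shrinkIter h l w)

/-- Index of the block (in a list of block sizes) containing position `j`. -/
def blockOf : List ℕ → ℕ → ℕ
  | [], _ => 0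
  | b :: bs, j => if j < b then 0 else blockOf bs (j - b) + 1

/-- A node of the uncompressed parse tree `T̄(w)`: the `idx`-th symbol occurrence
(0-indexed) of `shrink^level(w)`. -/
structure TNode where
  level : ℕ
  idx : ℕ
deriving DecidableEq

/-- `v` is an actual node of `T̄(w)`. -/
def IsNode (h : ℕ → Sym α → Bool) (w : List (Sym α)) (v : TNode) : Prop :=
  v.level ≤ depth h w ∧ v.idx < (shrinkIter h v.level w).length

/-- The signature (symbol) of a node. -/
def sigAt (h : ℕ → Sym α → Bool) (w : List (Sym α)) (v : TNode) : Option (Sym α) :=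
  (shrinkIter h v.level w)[v.idx]?

/-- Index in `w` (i.e. on level 0) of the first position below the `j`-th symbol of
`shrink^l(w)`. -/
def startIdx (h : ℕ → Sym α → Bool) (w : List (Sym α)) : ℕ → ℕ → ℕ
  | 0, j => j
  | l + 1, j => startIdx h w l (((blocksAt h w l).take j).sum)

/-- The first level-0 position of the fragment represented by `v`. -/
def begIdx (h : ℕ → Sym α → Bool) (w : List (Sym α)) (v : TNode) : ℕ :=
  startIdx h w v.level v.idx

/-- One past the last level-0 position of the fragment represented by `v`. -/
def endIdx (h : ℕ → Sym α → Bool) (w : List (Sym α)) (v : TNode) : ℕ :=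
  startIdx h w v.level (v.idx + 1)

/-- `par(v)`. -/
def parNode (h : ℕ → Sym α → Bool) (w : List (Sym α)) (v : TNode) : TNode :=
  ⟨v.level + 1, blockOf (blocksAt h w v.level) v.idx⟩

/-- The parent of `v` exists in `T̄(w)`. -/
def HasPar (h : ℕ → Sym α → Bool) (w : List (Sym α)) (v : TNode) : Prop :=
  IsNode h w v ∧ v.level < depth h w

/-- The number of children of `v` (for `v.level ≥ 1`). -/
def degree (h : ℕ → Sym α → Bool) (w : List (Sym α)) (v : TNode) : ℕ :=
  (blocksAt h w (v.level - 1)).getD v.idx 0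

/-- `child(v,k)`, the `k`-th child of `v` (`k` is 1-indexed). -/
def childNode (h : ℕ → Sym α → Bool) (w : List (Sym α)) (v : TNode) (k : ℕ) : TNode :=
  ⟨v.level - 1, ((blocksAt h w (v.level - 1)).take v.idx).sum + (k - 1)⟩

/-- The `k`-th child of `v` exists in `T̄(w)`. -/
def HasChild (h : ℕ → Sym α → Bool) (w : List (Sym α)) (v : TNode) (k : ℕ) : Prop :=
  IsNode h w v ∧ 1 ≤ v.level ∧ 1 ≤ k ∧ k ≤ degree h w v

/-- `left(v)`. -/
def leftNode (v : TNode) : TNode := ⟨v.level, v.idx - 1⟩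

/-- `right(v)`. -/
def rightNode (v : TNode) : TNode := ⟨v.level, v.idx + 1⟩

/-- `left(v)` exists in `T̄(w)`. -/
def HasLeft (h : ℕ → Sym α → Bool) (w : List (Sym α)) (v : TNode) : Prop :=
  IsNode h w v ∧ 1 ≤ v.idx

/-- `right(v)` exists in `T̄(w)`. -/
def HasRight (h : ℕ → Sym α → Bool) (w : List (Sym α)) (v : TNode) : Prop :=
  IsNode h w v ∧ v.idx + 1 < (shrinkIter h v.level w).length

/-- `v'` is the counterpart (`v ≈ v'`) of the node `v` of `T̄(w)` with respect to the
extension `x·w·y`: a node of `T̄(xwy)` of the same level with the same signature,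
representing the fragment of `xwy` naturally corresponding to the fragment of `w`
represented by `v`. -/
def Counterpart (h : ℕ → Sym α → Bool) (x w y : List α) (v v' : TNode) : Prop :=
  IsNode h (embed (x ++ w ++ y)) v' ∧
  v'.level = v.level ∧
  sigAt h (embed (x ++ w ++ y)) v' = sigAt h (embed w) v ∧
  begIdx h (embed (x ++ w ++ y)) v' = x.length + begIdx h (embed w) v ∧
  endIdx h (embed (x ++ w ++ y)) v' = x.length + endIdx h (embed w) v

/-- `v` is preserved in the extension `x·w·y`. -/
def Preserved (h : ℕ → Sym α → Bool) (x w y : List α) (v : TNode) : Prop :=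
  ∃ v', Counterpart h x w y v v'

/-- `v` is right context-insensitive: preserved in every right extension. -/
def RightCI (h : ℕ → Sym α → Bool) (w : List α) (v : TNode) : Prop :=
  ∀ y : List α, Preserved h [] w y v

/-- `v` is left context-insensitive: preserved in every left extension. -/
def LeftCI (h : ℕ → Sym α → Bool) (w : List α) (v : TNode) : Prop :=
  ∀ x : List α, Preserved h x w [] v

/-- `v` is context-insensitive: preserved in every extension. -/
def ContextIns (h : ℕ → Sym α → Bool) (w : List α) (v : TNode) : Prop :=
  ∀ x y : List α, Preserved h x w y v

/-- `u` is a (not necessarily proper) ancestor of `v` in `T̄(w)`. -/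
def Ancestor (h : ℕ → Sym α → Bool) (w : List (Sym α)) (u v : TNode) : Prop :=
  v.level ≤ u.level ∧ begIdx h w u ≤ begIdx h w v ∧ endIdx h w v ≤ endIdx h w u

/-- `u` is a proper ancestor of `v`. -/
def ProperAnc (h : ℕ → Sym α → Bool) (w : List (Sym α)) (u v : TNode) : Prop :=
  Ancestor h w u v ∧ u ≠ v

/-- The fragments of the listed nodes tile `w[a..]` consecutively from left to right. -/
def chainFrom (h : ℕ → Sym α → Bool) (w : List (Sym α)) : ℕ → List TNode → Prop
  | a, [] => a = w.length
  | a, v :: L => begIdx h w v = a ∧ chainFrom h w (endIdx h w v) L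

/-- `L` is a layer of the uncompressed parse tree `T̄(w)`, listed from left to right:
every leaf has exactly one ancestor in `L` (equivalently, the fragments of
the nodes of `L` tile `w`). -/
def IsBarLayer (h : ℕ → Sym α → Bool) (w : List (Sym α)) (L : List TNode) : Prop :=
  (∀ v ∈ L, IsNode h w v) ∧ chainFrom h w 0 L

/-- `v` is a node of the compressed parse tree `T(w)` (obtained from `T̄(w)` by
dissolving nodes with exactly one child). -/
def InCompTree (h : ℕ → Sym α → Bool) (w : List (Sym α)) (v : TNode) : Prop :=
  IsNode h w v ∧ (v.level = 0 ∨ 2 ≤ degree h w v)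

/-- `L` is a layer of the compressed parse tree `T(w)`, listed from left to right. -/
def IsCompLayer (h : ℕ → Sym α → Bool) (w : List (Sym α)) (L : List TNode) : Prop :=
  (∀ v ∈ L, InCompTree h w v) ∧ chainFrom h w 0 L

/-- `u` is the parent of `v` in the compressed parse tree `T(w)`:
the nearest proper ancestor of `v` that is a node of `T(w)`. -/
def CompParent (h : ℕ → Sym α → Bool) (w : List (Sym α)) (u v : TNode) : Prop :=
  InCompTree h w u ∧ InCompTree h w v ∧ ProperAnc h w u v ∧
  ∀ z, InCompTree h w z → ProperAnc h w z v → Ancestor h w z u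

/-- `D` is the decomposition of `w` corresponding to the layer `L` of `T̄(w)`. -/
def IsDecompOf (h : ℕ → Sym α → Bool) (w : List α) (D : List (Sym α)) (L : List TNode) : Prop :=
  IsBarLayer h (embed w) L ∧ L.map (sigAt h (embed w)) = D.map some

/-- `D` is a decomposition of `w`. -/
def IsDecomp (h : ℕ → Sym α → Bool) (w : List α) (D : List (Sym α)) : Prop :=
  ∃ L, IsDecompOf h w D L

/-- `D` is a context-insensitive decomposition of `w`. -/
def IsCIDecomp (h : ℕ → Sym α → Bool) (w : List α) (D : List (Sym α)) : Prop :=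
  ∃ L, IsDecompOf h w D L ∧ ∀ v ∈ L, ContextIns h w v

/-- `D` is a right context-insensitive decomposition of `w`. -/
def IsRightCIDecomp (h : ℕ → Sym α → Bool) (w : List α) (D : List (Sym α)) : Prop :=
  ∃ L, IsDecompOf h w D L ∧ ∀ v ∈ L, RightCI h w v

/-- `D` is a left context-insensitive decomposition of `w`. -/
def IsLeftCIDecomp (h : ℕ → Sym α → Bool) (w : List α) (D : List (Sym α)) : Prop :=
  ∃ L, IsDecompOf h w D L ∧ ∀ v ∈ L, LeftCI h w v

/-- The level of a symbol. -/
noncomputable def symLevel (h : ℕ → Sym α → Bool) : Sym α → ℕ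
  | .base _ => 0
  | .pow s _ => symLevel h s + 1
  | .pair s t =>
      sInf {l | l % 2 = 0 ∧ max (symLevel h s) (symLevel h t) < l ∧
                h (l / 2) s = false ∧ h (l / 2) t = true}

/-- `S` is a consistent symbol: it occurs in `shrink^i(w)` for some nonempty `w ∈ Σ⁺`. -/
def Consistent (h : ℕ → Sym α → Bool) (S : Sym α) : Prop :=
  ∃ (w : List α) (i : ℕ), w ≠ [] ∧ S ∈ shrinkIter h i (embed w)

/-- Longest common prefix of two lists. -/
def lcp {β : Type} [DecidableEq β] : List β → List β → List β
  | a :: l, b :: m => if a = b then a :: lcp l m else []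
  | _, _ => []

end DynStr
namespace DynStr

open MeasureTheory ProbabilityTheory


section Aux

set_option linter.unusedSectionVars false

variable {α : Type} [DecidableEq α]

/-- The predicate on adjacent pairs merged by `compress g`. -/
def pairPred (g : Sym α → Bool) : Sym α × Sym α → Bool := fun p => !g p.1 && g p.2

lemma countP_tail_true (g : Sym α → Bool) (b : Sym α) (l : List (Sym α)) (hb : g b = true) :
    ((b :: l).zip l).countP (pairPred g) = (l.zip l.tail).countP (pairPred g) := by
  cases l with
  | nil => rfl
  | cons c l' =>
    simp [List.zip_cons_cons, List.countP_cons, pairPred, hb]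

lemma compress_length_add (g : Sym α → Bool) : ∀ w : List (Sym α),
    (compress g w).length + (w.zip w.tail).countP (pairPred g) = w.length := by
  intro w
  induction w using compress.induct (g := g) with
  | case1 => rfl
  | case2 a => rfl
  | case3 a b l hc ih =>
    rw [compress, if_pos hc]
    simp only [List.length_cons, List.tail_cons, List.zip_cons_cons, List.countP_cons]
    rw [countP_tail_true g b l hc.2]
    simp only [pairPred, hc.1, hc.2]
    simp only [Bool.not_false, Bool.not_true, Bool.and_self, Bool.true_and, Bool.false_and,
      if_true, if_false, reduceIte]
    omega
  | case4 a b l hc ih =>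
    rw [compress, if_neg hc]
    have hp : pairPred g (a, b) = false := by
      simp only [pairPred]
      cases ha : g a <;> cases hbb : g b <;> simp_all
    simp only [List.length_cons, List.tail_cons, List.zip_cons_cons,
      List.countP_cons, hp]
    simp only [List.tail_cons, List.length_cons] at ih
    rw [if_neg (by simp)]
    omega

lemma chain'_zip_tail {R : Sym α → Sym α → Prop} :
    ∀ w : List (Sym α), w.Chain' R → ∀ p ∈ w.zip w.tail, R p.1 p.2 := by
  intro w
  induction w with
  | nil => intro _ p hp; simp at hp
  | cons a l ih =>
    intro hch p hp
    cases l with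
    | nil => simp at hp
    | cons b l' =>
      unfold List.Chain' at hch; rw [List.isChain_cons_cons] at hch
      simp only [List.tail_cons, List.zip_cons_cons, List.mem_cons] at hp
      rcases hp with rfl | hp
      · exact hch.1
      · exact ih hch.2 p (by simpa using hp)

variable {Ω : Type} [MeasurableSpace Ω] {μ : Measure Ω} [IsProbabilityMeasure μ]

lemma measure_pair_event (f g : Ω → Bool) (hf : Measurable f) (hg : Measurable g)
    (hind : IndepFun f g μ) (h1 : μ {ω | f ω = true} = 1/2) (h2 : μ {ω | g ω = true} = 1/2) :
    μ {ω | f ω = false ∧ g ω = true} = 1/4 := by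
  have hset : {ω | f ω = false ∧ g ω = true} = f ⁻¹' {false} ∩ g ⁻¹' {true} := by
    ext ω; simp [Set.mem_preimage]
  have htrue : f ⁻¹' {true} = {ω | f ω = true} := by ext ω; simp
  have hgt : g ⁻¹' {true} = {ω | g ω = true} := by ext ω; simp
  have hmt : MeasurableSet {ω | f ω = true} := by
    rw [← htrue]; exact hf (measurableSet_singleton true)
  have hf' : μ (f ⁻¹' {false}) = 1/2 := by
    have hc : f ⁻¹' {false} = {ω | f ω = true}ᶜ := by ext ω; cases h : f ω <;> simp [h]
    rw [hc, prob_compl_eq_one_sub hmt, h1]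
    refine ENNReal.sub_eq_of_eq_add (by norm_num) ?_
    rw [← two_mul, ENNReal.mul_div_cancel' (by norm_num) (by norm_num)]
  rw [hset, hind.measure_inter_preimage_eq_mul {false} {true}
    (measurableSet_singleton false) (measurableSet_singleton true), hf', hgt, h2]
  rw [show (1:ENNReal)/2 = 2⁻¹ by norm_num, show (1:ENNReal)/4 = (2*2)⁻¹ by norm_num,
    ENNReal.mul_inv (by norm_num) (by norm_num)]

lemma integral_countP (i : ℕ) (H : ℕ → Sym α → Ω → Bool)
    (hmeas : ∀ S : Sym α, Measurable (H i S))
    (hunif : ∀ S : Sym α, μ {ω | H i S ω = true} = 1 / 2)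
    (hindep : iIndepFun
      (fun S => H i S) μ) :
    ∀ ps : List (Sym α × Sym α), (∀ p ∈ ps, p.1 ≠ p.2) →
      Integrable (fun ω => ((ps.countP (pairPred (fun S => H i S ω))) : ℝ)) μ ∧
      ∫ ω, ((ps.countP (pairPred (fun S => H i S ω))) : ℝ) ∂μ = (ps.length : ℝ) / 4 := by
  intro ps
  induction ps with
  | nil =>
    intro _
    constructor
    · simpa using integrable_const (0 : ℝ)
    · simp
  | cons p ps ih =>
    intro hne
    obtain ⟨a, b⟩ := p
    have hab : a ≠ b := hne (a, b) (List.mem_cons_self)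
    have ihp := ih (fun q hq => hne q (List.mem_cons_of_mem _ hq))
    set A : Set Ω := {ω | H i a ω = false ∧ H i b ω = true} with hA
    have hAmeas : MeasurableSet A := by
      have : A = (H i a) ⁻¹' {false} ∩ (H i b) ⁻¹' {true} := by
        ext ω; simp [hA, Set.mem_preimage]
      rw [this]
      exact ((hmeas a) (measurableSet_singleton false)).inter
        ((hmeas b) (measurableSet_singleton true))
    have hmuA : μ A = 1/4 :=
      measure_pair_event (H i a) (H i b) (hmeas a) (hmeas b)
        (hindep.indepFun hab) (hunif a) (hunif b)
    have hfun : (fun ω => (((((a, b) :: ps).countP (pairPred (fun S => H i S ω)))) : ℝ)) =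
        (fun ω => ((ps.countP (pairPred (fun S => H i S ω))) : ℝ)) +
          A.indicator (fun _ => (1 : ℝ)) := by
      funext ω
      simp only [List.countP_cons, Pi.add_apply, Nat.cast_add, Set.indicator_apply]
      congr 1
      by_cases hω : ω ∈ A
      · have : pairPred (fun S => H i S ω) (a, b) = true := by
          simp only [hA, Set.mem_setOf_eq] at hω
          simp [pairPred, hω.1, hω.2]
        simp [this, hω]
      · have : pairPred (fun S => H i S ω) (a, b) = false := by
          simp only [hA, Set.mem_setOf_eq, not_and] at hω
          simp only [pairPred]
          cases h1 : H i a ω <;> cases h2 : H i b ω <;> simp_all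
        simp [this, hω]
    have hind_int : Integrable (A.indicator (fun _ => (1 : ℝ))) μ :=
      (integrable_const (1 : ℝ)).indicator hAmeas
    have hint : Integrable
        (fun ω => (((((a, b) :: ps).countP (pairPred (fun S => H i S ω)))) : ℝ)) μ := by
      rw [hfun]; exact ihp.1.add hind_int
    refine ⟨hint, ?_⟩
    rw [hfun, integral_add' ihp.1 hind_int, ihp.2]
    have : ∫ ω, A.indicator (fun _ => (1 : ℝ)) ω ∂μ = (μ A).toReal := by
      rw [integral_indicator_const (1 : ℝ) hAmeas]
      simp [measureReal_def]
    rw [this, hmuA]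
    have : ((1:ENNReal)/4).toReal = (1:ℝ)/4 := by
      rw [ENNReal.toReal_div]; norm_num
    rw [this]
    simp only [List.length_cons]
    push_cast
    ring

end Aux

/-- If the bits `hᵢ(S)`, `S ∈ 𝒮`, are independent uniform random bits,
then for every 1-repetition-free string `w` over `𝒮`,
`𝔼[|Compressᵢ(w)|] ≤ (3/4)·|w| + 1/4`. -/
theorem expected_compress_length_le
    {α : Type} [DecidableEq α] {Ω : Type} [MeasurableSpace Ω]
    (μ : Measure Ω) [IsProbabilityMeasure μ]
    (i : ℕ) (hi : 1 ≤ i)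
    (H : ℕ → Sym α → Ω → Bool)
    (hmeas : ∀ S : Sym α, Measurable (H i S))
    (hunif : ∀ S : Sym α, μ {ω | H i S ω = true} = 1 / 2)
    (hindep : iIndepFun
      (fun S => H i S) μ)
    (w : List (Sym α)) (hrf : w.Chain' (· ≠ ·)) :
    ∫ ω, ((compress (fun S => H i S ω) w).length : ℝ) ∂μ ≤
      3 / 4 * (w.length : ℝ) + 1 / 4 := by
  have hzip : ∀ p ∈ w.zip w.tail, p.1 ≠ p.2 := chain'_zip_tail w hrf
  obtain ⟨hint, hval⟩ := integral_countP i H hmeas hunif hindep (w.zip w.tail) hzip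
  have heq : ∀ ω, ((compress (fun S => H i S ω) w).length : ℝ) =
      (w.length : ℝ) - ((w.zip w.tail).countP (pairPred (fun S => H i S ω)) : ℝ) := by
    intro ω
    have := compress_length_add (fun S => H i S ω) w
    have : ((compress (fun S => H i S ω) w).length : ℝ) +
        ((w.zip w.tail).countP (pairPred (fun S => H i S ω)) : ℝ) = (w.length : ℝ) := by
      exact_mod_cast congrArg (Nat.cast : ℕ → ℝ) this
    linarith
  rw [integral_congr_ae (Filter.Eventually.of_forall heq),
    integral_sub (integrable_const _) hint, integral_const, hval]
  simp only [probReal_univ, smul_eq_mul, one_mul]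
  cases w with
  | nil => simp
  | cons a l =>
    have hlen : ((a :: l).zip (a :: l).tail).length = l.length := by
      simp [List.length_zip]
    rw [hlen]
    simp only [List.length_cons]
    push_cast
    linarith

end DynStr
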